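/- arXiv:1511.04553 — 3 statements merged into one kernel-verified Lean document; each statement's English description precedes it below -/
import Mathlib

section
/- For any real numbers x, x₀ > 0, any finite sequences of nonnegative reals y₁,…,y_m and z₁,…,z_m with z_i < x for all i, one has the lower bound ∏_{i=1}^m (1 - z_i/x)^{y_i} - exp(-(1/x₀)·∑_{i=1}^m y_i z_i) ≥ -(x₀/x²)·max(x₀ - x, 0) - (x₀/2)·max_{1≤i≤m} z_i/(x - z_i)². -/
/-!
Writing `M = maxᵢ zᵢ / (x - zᵢ)²` and `S = ∑ yᵢ zᵢ`, the inequality `log u ≥ 1 - u⁻¹` at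
`u = 1 - z / x` gives `log (1 - z / x) ≥ -z / (x - z) ≥ -(1 / x + M) z`, so the product is at
least `exp (-(1 / x + M) S)`. Convexity of `exp` bounds `exp (-(1 / x + M) S) - exp (-S / x₀)`
below by `-(1 / x - 1 / x₀ + M) S exp (-S / x₀)`; finally `1 / x - 1 / x₀ ≤ max (x₀ - x) 0 / x²`
and `S exp (-S / x₀) ≤ x₀ / e < x₀ / 2`.
-/

open Finset Real

lemma div_sub_le_one_div_add_div_sq_mul {x z : ℝ} (hz : 0 ≤ z) (hzx : z < x) :
    z / (x - z) ≤ (1 / x + z / (x - z) ^ 2) * z := by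
  have hxz : 0 < x - z := sub_pos.2 hzx
  have hx : 0 < x := hz.trans_lt hzx
  rw [div_add_div _ _ hx.ne' (by positivity), div_mul_eq_mul_div,
    div_le_div_iff₀ hxz (by positivity)]
  nlinarith [mul_nonneg (mul_nonneg hz hz) (mul_nonneg hz hxz.le)]

lemma exp_neg_mul_le_one_sub_div {x z M : ℝ} (hz : 0 ≤ z) (hzx : z < x)
    (hM : z / (x - z) ^ 2 ≤ M) : exp (-((1 / x + M) * z)) ≤ 1 - z / x := by
  have hx : 0 < x := hz.trans_lt hzx
  have hpos : 0 < 1 - z / x := sub_pos.2 ((div_lt_one hx).2 hzx)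
  rw [← le_log_iff_exp_le hpos]
  calc -((1 / x + M) * z) ≤ -(z / (x - z)) := by
        gcongr
        exact (div_sub_le_one_div_add_div_sq_mul hz hzx).trans (by gcongr)
    _ = 1 - (1 - z / x)⁻¹ := by
        have : x - z ≠ 0 := (sub_pos.2 hzx).ne'
        field_simp
        ring
    _ ≤ log (1 - z / x) := one_sub_inv_le_log_of_pos hpos

lemma exp_neg_mul_sum_le_prod_one_sub_div_rpow {ι : Type*} (s : Finset ι) {x M : ℝ}
    {y z : ι → ℝ} (hy : ∀ i ∈ s, 0 ≤ y i) (hz : ∀ i ∈ s, 0 ≤ z i) (hzx : ∀ i ∈ s, z i < x)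
    (hM : ∀ i ∈ s, z i / (x - z i) ^ 2 ≤ M) :
    exp (-(1 / x + M) * ∑ i ∈ s, y i * z i) ≤ ∏ i ∈ s, (1 - z i / x) ^ y i := by
  rw [mul_sum, exp_sum]
  refine prod_le_prod (fun i _ => (exp_pos _).le) fun i hi => ?_
  rw [show -(1 / x + M) * (y i * z i) = -((1 / x + M) * z i) * y i by ring, Real.exp_mul]
  exact rpow_le_rpow (exp_pos _).le (exp_neg_mul_le_one_sub_div (hz i hi) (hzx i hi) (hM i hi))
    (hy i hi)

lemma neg_div_mul_exp_neg_one_le_exp_sub_exp {a b k S : ℝ} (hb : 0 < b) (hk : 0 ≤ k)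
    (hS : 0 ≤ S) (hab : a ≤ b + k) :
    -(k / b) * exp (-1) ≤ exp (-a * S) - exp (-b * S) := by
  have hconvex : exp (-b * S) * ((b - a) * S) ≤ exp (-a * S) - exp (-b * S) := by
    have := mul_le_mul_of_nonneg_left (add_one_le_exp ((b - a) * S)) (exp_pos (-b * S)).le
    rw [mul_add, ← exp_add] at this
    ring_nf at this ⊢
    linarith
  calc -(k / b) * exp (-1) ≤ -(k / b) * (b * S * exp (-(b * S))) :=
        mul_le_mul_of_nonpos_left (mul_exp_neg_le_exp_neg_one _)
          (neg_nonpos.2 (div_nonneg hk hb.le))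
    _ = exp (-b * S) * (-k * S) := by
        field_simp
    _ ≤ exp (-b * S) * ((b - a) * S) := by
        gcongr
        linarith
    _ ≤ _ := hconvex

lemma one_div_le_one_div_add_max_sub_div_sq {x x₀ : ℝ} (hx : 0 < x) (hx₀ : 0 < x₀) :
    1 / x ≤ 1 / x₀ + max (x₀ - x) 0 / x ^ 2 := by
  rcases le_total x₀ x with h | h
  · have := one_div_le_one_div_of_le hx₀ h
    have := div_nonneg (le_max_right (x₀ - x) 0) (sq_nonneg x)
    linarith
  · rw [max_eq_left (sub_nonneg.2 h), div_add_div _ _ hx₀.ne' (by positivity),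
      div_le_div_iff₀ hx (by positivity)]
    nlinarith [mul_nonneg (sub_nonneg.2 h) hx.le]

theorem stmt_1 (m : ℕ) (hm : 0 < m) (x x₀ : ℝ) (hx : 0 < x) (hx₀ : 0 < x₀)
    (y z : Fin m → ℝ) (hy : ∀ i, 0 ≤ y i) (hz : ∀ i, 0 ≤ z i) (hzx : ∀ i, z i < x) :
    -(x₀ / x ^ 2) * max (x₀ - x) 0
      - (x₀ / 2) * ((Finset.univ : Finset (Fin m)).sup' ⟨⟨0, hm⟩, Finset.mem_univ _⟩
          (fun i => z i / (x - z i) ^ 2))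
      ≤ (∏ i, (1 - z i / x) ^ (y i)) - Real.exp (-(1 / x₀) * ∑ i, y i * z i) := by
  set M := (univ : Finset (Fin m)).sup' ⟨⟨0, hm⟩, mem_univ _⟩ fun i => z i / (x - z i) ^ 2
  have hM : ∀ i ∈ univ, z i / (x - z i) ^ 2 ≤ M := fun i hi => le_sup' (fun i => z i / (x - z i) ^ 2) hi
  have hM0 : 0 ≤ M := (div_nonneg (hz ⟨0, hm⟩) (sq_nonneg _)).trans (hM _ (mem_univ _))
  set p := max (x₀ - x) 0
  have hp : 0 ≤ p := le_max_right _ _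
  have hdiff := neg_div_mul_exp_neg_one_le_exp_sub_exp (one_div_pos.2 hx₀)
    (k := p / x ^ 2 + M) (by positivity) (sum_nonneg fun i (_ : i ∈ univ) => mul_nonneg (hy i) (hz i))
    (a := 1 / x + M) (by linarith [one_div_le_one_div_add_max_sub_div_sq hx hx₀])
  have hprod := exp_neg_mul_sum_le_prod_one_sub_div_rpow univ (fun i _ => hy i)
    (fun i _ => hz i) (fun i _ => hzx i) hM
  have he := exp_neg_one_lt_half
  have hu : 0 ≤ x₀ / x ^ 2 * p := by positivity
  have hv : 0 ≤ x₀ * M := by positivity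
  calc -(x₀ / x ^ 2) * p - x₀ / 2 * M
      ≤ -(x₀ / x ^ 2 * p + x₀ * M) * exp (-1) := by
        nlinarith [mul_le_mul_of_nonneg_left he.le hu, mul_le_mul_of_nonneg_left he.le hv]
    _ = -((p / x ^ 2 + M) / (1 / x₀)) * exp (-1) := by rw [one_div, div_inv_eq_mul]; ring
    _ ≤ _ := hdiff
    _ ≤ _ := by linarith
end

section
/- Let F and G be cumulative distribution functions on ℝ of probability measures with finite first moments, and let U be a random variable uniformly distributed on (0,1). Then the pair (F⁻¹(U), G⁻¹(U)), where F⁻¹(u) = inf{x ∈ ℝ : F(x) ≥ u} is the generalized inverse, is a coupling achieving the Kantorovich–Rubinstein distance: E|F⁻¹(U) - G⁻¹(U)| = ∫₀¹ |F⁻¹(u) - G⁻¹(u)| du = ∫_{-∞}^{∞} |F(x) - G(x)| dx = d₁(F, G). -/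
open MeasureTheory

/-- The Kantorovich–Rubinstein (Wasserstein-1) distance between two probability
measures on ℝ, defined as the infimum over couplings of the expected absolute
difference. -/
noncomputable def wasserstein1 (μ ν : Measure ℝ) : ℝ :=
  sInf {c : ℝ | ∃ π : Measure (ℝ × ℝ), IsProbabilityMeasure π ∧
    π.map Prod.fst = μ ∧ π.map Prod.snd = ν ∧ c = ∫ p, |p.1 - p.2| ∂π}

/-- The cumulative distribution function of a measure on ℝ. -/
noncomputable def cdfOf (μ : Measure ℝ) : ℝ → ℝ := fun x => (μ (Set.Iic x)).toReal

/-- The generalized inverse (quantile function) of a cdf. -/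
noncomputable def quantile (F : ℝ → ℝ) (u : ℝ) : ℝ := sInf {x : ℝ | u ≤ F x}

/-!
Since `|a - b|` is the Lebesgue measure of `Ici a ∆ Ici b`, Fubini gives, for every coupling `π`
of `μ` and `ν`, `∫ |x - y| dπ = ∫ π({x ≤ t} ∆ {y ≤ t}) dt ≥ ∫ |F t - G t| dt`. On `(0, 1)` the
quantile function satisfies the Galois relation `F⁻¹ u ≤ x ↔ u ≤ F x`; hence `F⁻¹` pushes the
uniform law forward to `μ`, and under the quantile coupling the two events above become the
nested intervals `{u ≤ F t}` and `{u ≤ G t}`, so the lower bound is attained.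
-/

open Set Filter Topology ProbabilityTheory
open scoped symmDiff

theorem Set.Ici_symmDiff_Ici {α : Type*} [LinearOrder α] (a b : α) :
    Ici a ∆ Ici b = Ico (min a b) (max a b) := by
  rw [Set.symmDiff_def, Ici_sdiff_Ici, Ici_sdiff_Ici, Ico_union_Ico' le_rfl le_rfl, max_comm]

theorem Set.Iic_symmDiff_Iic {α : Type*} [LinearOrder α] (a b : α) :
    Iic a ∆ Iic b = Ioc (min a b) (max a b) := by
  rw [Set.symmDiff_def, Iic_sdiff_Iic, Iic_sdiff_Iic, union_comm, Ioc_union_Ioc_symm]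

theorem Real.volume_Ici_symmDiff_Ici (a b : ℝ) :
    volume (Ici a ∆ Ici b) = ENNReal.ofReal |a - b| := by
  rw [Ici_symmDiff_Ici, Real.volume_Ico, max_sub_min_eq_abs, abs_sub_comm]

theorem lintegral_ofReal_abs_sub_eq_lintegral_symmDiff {α : Type*} [MeasurableSpace α]
    {π : Measure α} [SFinite π] {X Y : α → ℝ} (hX : Measurable X) (hY : Measurable Y) :
    ∫⁻ p, ENNReal.ofReal |X p - Y p| ∂π = ∫⁻ t, π ((X ⁻¹' Iic t) ∆ (Y ⁻¹' Iic t)) := by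
  set S : Set (α × ℝ) := {q | X q.1 ≤ q.2} ∆ {q | Y q.1 ≤ q.2}
  have hS : MeasurableSet S :=
    (measurableSet_le (hX.comp measurable_fst) measurable_snd).symmDiff
      (measurableSet_le (hY.comp measurable_fst) measurable_snd)
  calc ∫⁻ p, ENNReal.ofReal |X p - Y p| ∂π
      = ∫⁻ p, volume (Prod.mk p ⁻¹' S) ∂π := by
        refine lintegral_congr fun p => ?_
        rw [preimage_symmDiff]
        exact (Real.volume_Ici_symmDiff_Ici _ _).symm
    _ = (π.prod volume) S := (Measure.prod_apply hS).symm
    _ = ∫⁻ t, π ((X ⁻¹' Iic t) ∆ (Y ⁻¹' Iic t)) := by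
        rw [Measure.prod_apply_symm hS]
        rfl

theorem lintegral_ofReal_abs_sub_eq_lintegral_symmDiff' {α : Type*} [MeasurableSpace α]
    {π : Measure α} [SFinite π] {X Y : α → ℝ} (hX : AEMeasurable X π) (hY : AEMeasurable Y π) :
    ∫⁻ p, ENNReal.ofReal |X p - Y p| ∂π = ∫⁻ t, π ((X ⁻¹' Iic t) ∆ (Y ⁻¹' Iic t)) := by
  have hXY : ∀ᵐ p ∂π, X p = hX.mk X p ∧ Y p = hY.mk Y p :=
    hX.ae_eq_mk.and hY.ae_eq_mk
  calc ∫⁻ p, ENNReal.ofReal |X p - Y p| ∂π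
      = ∫⁻ p, ENNReal.ofReal |hX.mk X p - hY.mk Y p| ∂π := by
        refine lintegral_congr_ae ?_
        filter_upwards [hXY] with p hp
        rw [hp.1, hp.2]
    _ = ∫⁻ t, π ((hX.mk X ⁻¹' Iic t) ∆ (hY.mk Y ⁻¹' Iic t)) :=
        lintegral_ofReal_abs_sub_eq_lintegral_symmDiff hX.measurable_mk hY.measurable_mk
    _ = ∫⁻ t, π ((X ⁻¹' Iic t) ∆ (Y ⁻¹' Iic t)) := by
        refine lintegral_congr fun t => measure_congr ?_
        refine EventuallyEq.symmDiff ?_ ?_ <;> refine eventuallyEq_set.2 ?_ <;>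
        · filter_upwards [hXY] with p hp
          simp only [mem_preimage, hp.1, hp.2]

theorem ofReal_abs_measureReal_sub_le_measure_symmDiff {α : Type*} [MeasurableSpace α]
    (π : Measure α) [IsFiniteMeasure π] (A B : Set α) :
    ENNReal.ofReal |π.real A - π.real B| ≤ π (A ∆ B) := by
  rcases le_total (π.real A) (π.real B) with h | h
  · rw [abs_of_nonpos (sub_nonpos.2 h), neg_sub, ENNReal.ofReal_sub _ measureReal_nonneg,
      ofReal_measureReal, ofReal_measureReal, symmDiff_comm]
    exact le_measure_symmDiff
  · rw [abs_of_nonneg (sub_nonneg.2 h), ENNReal.ofReal_sub _ measureReal_nonneg,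
      ofReal_measureReal, ofReal_measureReal]
    exact le_measure_symmDiff

theorem StieltjesFunction.quantile_le_iff (F : StieltjesFunction ℝ) {u : ℝ}
    (hlo : ∃ x, F x < u) (hhi : ∃ x, u ≤ F x) (x : ℝ) :
    quantile F u ≤ x ↔ u ≤ F x := by
  obtain ⟨x₀, hx₀⟩ := hlo
  have hbdd : BddBelow {y | u ≤ F y} := ⟨x₀, fun y hy =>
    (F.mono.reflect_lt (hx₀.trans_le hy)).le⟩
  refine ⟨fun hq => ?_, fun hx => csInf_le hbdd hx⟩
  suffices u ≤ F (quantile F u) from this.trans (F.mono hq)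
  have hF : Tendsto F (𝓝[>] quantile F u) (𝓝 (F (quantile F u))) :=
    (F.right_continuous _).tendsto.mono_left (nhdsWithin_mono _ Ioi_subset_Ici_self)
  refine ge_of_tendsto hF ?_
  filter_upwards [self_mem_nhdsWithin] with y hy
  obtain ⟨z, hz, hzy⟩ := exists_lt_of_csInf_lt hhi hy
  exact le_trans hz (F.mono hzy.le)

theorem Real.volume_restrict_Ioo_zero_one (s : Set ℝ) :
    volume.restrict (Ioo 0 1) s = volume (s ∩ Icc 0 1) := by
  rw [Measure.restrict_congr_set Ioo_ae_eq_Icc, Measure.restrict_apply' measurableSet_Icc]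

instance : IsProbabilityMeasure (volume.restrict (Ioo (0 : ℝ) 1)) :=
  ⟨by rw [Real.volume_restrict_Ioo_zero_one, univ_inter, Real.volume_Icc, sub_zero,
    ENNReal.ofReal_one]⟩

theorem cdfOf_eq_cdf (μ : Measure ℝ) [IsProbabilityMeasure μ] : cdfOf μ = cdf μ := by
  ext x
  rw [cdf_eq_real]
  rfl

section Quantile

variable (μ ν : Measure ℝ)

theorem quantile_cdf_le_iff {u : ℝ} (hu : u ∈ Ioo 0 1) (x : ℝ) :
    quantile (cdf μ) u ≤ x ↔ u ≤ cdf μ x :=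
  (cdf μ).quantile_le_iff ((tendsto_cdf_atBot μ).eventually (eventually_lt_nhds hu.1)).exists
    (((tendsto_cdf_atTop μ).eventually (eventually_gt_nhds hu.2)).exists.imp
      fun _ => le_of_lt) x

theorem monotoneOn_quantile_cdf : MonotoneOn (quantile (cdf μ)) (Ioo 0 1) :=
  fun _ hu _ hv huv => (quantile_cdf_le_iff μ hu _).2 <|
    huv.trans ((quantile_cdf_le_iff μ hv _).1 le_rfl)

theorem aemeasurable_quantile_cdf : AEMeasurable (quantile (cdf μ)) (volume.restrict (Ioo 0 1)) :=
  aemeasurable_restrict_of_monotoneOn measurableSet_Ioo (monotoneOn_quantile_cdf μ)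

theorem preimage_quantile_cdf_Iic_ae_eq (t : ℝ) :
    quantile (cdf μ) ⁻¹' Iic t =ᵐ[volume.restrict (Ioo 0 1)] Iic (cdf μ t) := by
  refine eventuallyEq_set.2 ?_
  filter_upwards [ae_restrict_mem measurableSet_Ioo] with u hu
  exact quantile_cdf_le_iff μ hu t

theorem map_quantile_cdf [IsProbabilityMeasure μ] :
    (volume.restrict (Ioo 0 1)).map (quantile (cdf μ)) = μ := by
  refine Measure.ext_of_Iic _ _ fun t => ?_
  rw [Measure.map_apply_of_aemeasurable (aemeasurable_quantile_cdf μ) measurableSet_Iic,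
    measure_congr (preimage_quantile_cdf_Iic_ae_eq μ t), Real.volume_restrict_Ioo_zero_one,
    inter_comm, ← Ici_inter_Iic, inter_assoc, Iic_inter_Iic, min_eq_right (cdf_le_one μ t),
    Ici_inter_Iic, Real.volume_Icc, sub_zero, ofReal_cdf]

theorem map_quantile_cdf_comp [IsProbabilityMeasure μ] {Ω : Type*} [MeasurableSpace Ω]
    {P : Measure Ω} {U : Ω → ℝ} (hU : P.map U = volume.restrict (Ioo 0 1)) :
    P.map (fun ω => quantile (cdf μ) (U ω)) = μ := by
  have hUm : AEMeasurable U P := aemeasurable_of_map_neZero (hU ▸ inferInstance)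
  have hq : AEMeasurable (quantile (cdf μ)) (P.map U) := hU ▸ aemeasurable_quantile_cdf μ
  exact (hq.map_map_of_aemeasurable hUm).symm.trans (by rw [hU, map_quantile_cdf])

theorem lintegral_abs_quantile_cdf_sub :
    ∫⁻ u in Ioo 0 1, ENNReal.ofReal |quantile (cdf μ) u - quantile (cdf ν) u| =
      ∫⁻ t, ENNReal.ofReal |cdf μ t - cdf ν t| := by
  rw [lintegral_ofReal_abs_sub_eq_lintegral_symmDiff' (aemeasurable_quantile_cdf μ)
    (aemeasurable_quantile_cdf ν)]
  refine lintegral_congr fun t => ?_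
  have hsub : Iic (cdf μ t) ∆ Iic (cdf ν t) ⊆ Icc 0 1 := by
    rw [Iic_symmDiff_Iic]
    exact Ioc_subset_Icc_self.trans <| Icc_subset_Icc (le_min (cdf_nonneg μ t) (cdf_nonneg ν t))
      (max_le (cdf_le_one μ t) (cdf_le_one ν t))
  rw [measure_congr
      ((preimage_quantile_cdf_Iic_ae_eq μ t).symmDiff (preimage_quantile_cdf_Iic_ae_eq ν t)),
    Real.volume_restrict_Ioo_zero_one, inter_eq_left.2 hsub, Iic_symmDiff_Iic, Real.volume_Ioc,
    max_sub_min_eq_abs, abs_sub_comm]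

theorem integral_abs_quantile_cdf_sub :
    ∫ u in Ioo 0 1, |quantile (cdf μ) u - quantile (cdf ν) u| = ∫ t, |cdf μ t - cdf ν t| := by
  rw [integral_eq_lintegral_of_nonneg_ae
      (f := fun u => |quantile (cdf μ) u - quantile (cdf ν) u|) (ae_of_all _ fun _ => abs_nonneg _)
      ((aemeasurable_quantile_cdf μ).sub (aemeasurable_quantile_cdf ν)).abs.aestronglyMeasurable,
    integral_eq_lintegral_of_nonneg_ae (f := fun t => |cdf μ t - cdf ν t|)
      (ae_of_all _ fun _ => abs_nonneg _)
      ((monotone_cdf μ).measurable.sub (monotone_cdf ν).measurable).abs.aestronglyMeasurable,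
    lintegral_abs_quantile_cdf_sub]

noncomputable def quantileCoupling (μ ν : Measure ℝ) : Measure (ℝ × ℝ) :=
  (volume.restrict (Ioo 0 1)).map fun u => (quantile (cdf μ) u, quantile (cdf ν) u)

theorem aemeasurable_quantile_cdf_prod :
    AEMeasurable (fun u => (quantile (cdf μ) u, quantile (cdf ν) u))
      (volume.restrict (Ioo 0 1)) :=
  (aemeasurable_quantile_cdf μ).prodMk (aemeasurable_quantile_cdf ν)

instance : IsProbabilityMeasure (quantileCoupling μ ν) :=
  Measure.isProbabilityMeasure_map (aemeasurable_quantile_cdf_prod μ ν)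

theorem map_fst_quantileCoupling [IsProbabilityMeasure μ] :
    (quantileCoupling μ ν).map Prod.fst = μ := by
  rw [quantileCoupling, AEMeasurable.map_map_of_aemeasurable measurable_fst.aemeasurable
    (aemeasurable_quantile_cdf_prod μ ν)]
  exact map_quantile_cdf μ

theorem map_snd_quantileCoupling [IsProbabilityMeasure ν] :
    (quantileCoupling μ ν).map Prod.snd = ν := by
  rw [quantileCoupling, AEMeasurable.map_map_of_aemeasurable measurable_snd.aemeasurable
    (aemeasurable_quantile_cdf_prod μ ν)]
  exact map_quantile_cdf ν

theorem integral_abs_sub_quantileCoupling :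
    ∫ p, |p.1 - p.2| ∂quantileCoupling μ ν = ∫ t, |cdf μ t - cdf ν t| := by
  rw [quantileCoupling, integral_map (f := fun p : ℝ × ℝ => |p.1 - p.2|)
    (aemeasurable_quantile_cdf_prod μ ν)
    (continuous_fst.sub continuous_snd).abs.aestronglyMeasurable]
  exact integral_abs_quantile_cdf_sub μ ν

end Quantile

section Coupling

variable {μ ν : Measure ℝ} [IsProbabilityMeasure μ] [IsProbabilityMeasure ν]
  {π : Measure (ℝ × ℝ)} [IsFiniteMeasure π]

theorem lintegral_abs_cdf_sub_le_of_coupling (h1 : π.map Prod.fst = μ)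
    (h2 : π.map Prod.snd = ν) :
    ∫⁻ t, ENNReal.ofReal |cdf μ t - cdf ν t| ≤ ∫⁻ p, ENNReal.ofReal |p.1 - p.2| ∂π := by
  rw [lintegral_ofReal_abs_sub_eq_lintegral_symmDiff measurable_fst measurable_snd]
  refine lintegral_mono fun t => ?_
  rw [cdf_eq_real, cdf_eq_real, ← h1, ← h2,
    map_measureReal_apply measurable_fst measurableSet_Iic,
    map_measureReal_apply measurable_snd measurableSet_Iic]
  exact ofReal_abs_measureReal_sub_le_measure_symmDiff π _ _

theorem integral_abs_cdf_sub_le_of_coupling (hμ : Integrable id μ) (hν : Integrable id ν)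
    (h1 : π.map Prod.fst = μ) (h2 : π.map Prod.snd = ν) :
    ∫ t, |cdf μ t - cdf ν t| ≤ ∫ p, |p.1 - p.2| ∂π := by
  have hcost : Integrable (fun p : ℝ × ℝ => |p.1 - p.2|) π :=
    (((h1 ▸ hμ).comp_measurable measurable_fst).sub
      ((h2 ▸ hν).comp_measurable measurable_snd)).abs
  rw [integral_eq_lintegral_of_nonneg_ae (f := fun t => |cdf μ t - cdf ν t|)
      (ae_of_all _ fun _ => abs_nonneg _)
      ((monotone_cdf μ).measurable.sub (monotone_cdf ν).measurable).abs.aestronglyMeasurable,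
    integral_eq_lintegral_of_nonneg_ae (ae_of_all _ fun _ => abs_nonneg _)
      hcost.aestronglyMeasurable]
  exact ENNReal.toReal_mono hcost.lintegral_lt_top.ne
    (lintegral_abs_cdf_sub_le_of_coupling h1 h2)

theorem integral_abs_cdf_sub_eq_wasserstein1 (hμ : Integrable id μ) (hν : Integrable id ν) :
    ∫ t, |cdf μ t - cdf ν t| = wasserstein1 μ ν := by
  have hmem : ∫ t, |cdf μ t - cdf ν t| ∈ {c : ℝ | ∃ π : Measure (ℝ × ℝ),
      IsProbabilityMeasure π ∧ π.map Prod.fst = μ ∧ π.map Prod.snd = ν ∧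
        c = ∫ p, |p.1 - p.2| ∂π} :=
    ⟨quantileCoupling μ ν, inferInstance, map_fst_quantileCoupling μ ν,
      map_snd_quantileCoupling μ ν, (integral_abs_sub_quantileCoupling μ ν).symm⟩
  refine le_antisymm (le_csInf ⟨_, hmem⟩ ?_) (csInf_le ⟨0, ?_⟩ hmem)
  · rintro c ⟨π, _, h1, h2, rfl⟩
    exact integral_abs_cdf_sub_le_of_coupling hμ hν h1 h2
  · rintro c ⟨π, -, -, -, rfl⟩
    exact integral_nonneg fun _ => abs_nonneg _

end Coupling

theorem stmt_8_general {Ω : Type*} [MeasurableSpace Ω] (P : Measure Ω)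
    (μ ν : Measure ℝ) [IsProbabilityMeasure μ] [IsProbabilityMeasure ν]
    (hμ : Integrable id μ) (hν : Integrable id ν)
    (U : Ω → ℝ) (hU : P.map U = volume.restrict (Set.Ioo (0 : ℝ) 1)) :
    P.map (fun ω => quantile (cdfOf μ) (U ω)) = μ ∧
    P.map (fun ω => quantile (cdfOf ν) (U ω)) = ν ∧
    (∫ ω, |quantile (cdfOf μ) (U ω) - quantile (cdfOf ν) (U ω)| ∂P)
      = ∫ u in Set.Ioo (0 : ℝ) 1, |quantile (cdfOf μ) u - quantile (cdfOf ν) u| ∧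
    (∫ u in Set.Ioo (0 : ℝ) 1, |quantile (cdfOf μ) u - quantile (cdfOf ν) u|)
      = ∫ x, |cdfOf μ x - cdfOf ν x| ∧
    (∫ x, |cdfOf μ x - cdfOf ν x|) = wasserstein1 μ ν := by
  have hUm : AEMeasurable U P := aemeasurable_of_map_neZero (hU ▸ inferInstance)
  have hcost : AEStronglyMeasurable (fun u => |quantile (cdf μ) u - quantile (cdf ν) u|)
      (P.map U) :=
    hU ▸ ((aemeasurable_quantile_cdf μ).sub
      (aemeasurable_quantile_cdf ν)).abs.aestronglyMeasurable
  rw [cdfOf_eq_cdf μ, cdfOf_eq_cdf ν]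
  refine ⟨map_quantile_cdf_comp μ hU, map_quantile_cdf_comp ν hU, ?_,
    integral_abs_quantile_cdf_sub μ ν, integral_abs_cdf_sub_eq_wasserstein1 hμ hν⟩
  rw [← hU, integral_map hUm hcost]

theorem stmt_8 {Ω : Type*} [MeasurableSpace Ω] (P : Measure Ω) [IsProbabilityMeasure P]
    (μ ν : Measure ℝ) [IsProbabilityMeasure μ] [IsProbabilityMeasure ν]
    (hμ : Integrable id μ) (hν : Integrable id ν)
    (U : Ω → ℝ) (hU : P.map U = volume.restrict (Set.Ioo (0 : ℝ) 1)) :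
    P.map (fun ω => quantile (cdfOf μ) (U ω)) = μ ∧
    P.map (fun ω => quantile (cdfOf ν) (U ω)) = ν ∧
    (∫ ω, |quantile (cdfOf μ) (U ω) - quantile (cdfOf ν) (U ω)| ∂P)
      = ∫ u in Set.Ioo (0 : ℝ) 1, |quantile (cdfOf μ) u - quantile (cdfOf ν) u| ∧
    (∫ u in Set.Ioo (0 : ℝ) 1, |quantile (cdfOf μ) u - quantile (cdfOf ν) u|)
      = ∫ x, |cdfOf μ x - cdfOf ν x| ∧
    (∫ x, |cdfOf μ x - cdfOf ν x|) = wasserstein1 μ ν :=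
  stmt_8_general P μ ν hμ hν U hU
end

section
/- Let X₁, …, X_n be i.i.d. real random variables with E[X₁] = 0 and E[|X₁|^{1+κ}] < ∞ for some 0 < κ ≤ 1. Then there is a constant Q_{1+κ} depending only on κ such that for every x > 0, P(|∑_{i=1}^n X_i| > x) ≤ Q_{1+κ} · E[|X₁|^{1+κ}] · n / x^{1+κ}. -/
/-!
For `1 < p ≤ 2` the derivative `u ↦ p u |u|^(p-2)` of `u ↦ |u|^p` is `(p-1)`-Hölder with
constant `2p`, so the first-order Taylor remainder obeys
`|a + b|^p ≤ |a|^p + p a |a|^(p-2) b + 2p |b|^p`. Taking `a` the partial sum and `b` the next,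
independent and centered, summand kills the middle term in expectation, and induction gives the
von Bahr–Esseen bound `E|X₁ + ⋯ + Xₙ|^p ≤ 2p ∑ E|Xᵢ|^p`. Markov's inequality applied to
`|X₁ + ⋯ + Xₙ|^p` then gives the tail bound with `Q = 2(1 + κ)`.
-/

open MeasureTheory ProbabilityTheory Finset

noncomputable def signedRpow (q u : ℝ) : ℝ := |u| ^ (q - 1) * u

theorem signedRpow_neg (q u : ℝ) : signedRpow q (-u) = -signedRpow q u := by
  simp [signedRpow]

theorem signedRpow_of_nonneg {q u : ℝ} (hq : q ≠ 0) (hu : 0 ≤ u) : signedRpow q u = u ^ q := by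
  rw [signedRpow, abs_of_nonneg hu, ← Real.rpow_add_one' hu (by simpa using hq), sub_add_cancel]

theorem abs_signedRpow {q : ℝ} (hq : q ≠ 0) (u : ℝ) : |signedRpow q u| = |u| ^ q := by
  rw [← signedRpow_of_nonneg hq (abs_nonneg u), signedRpow, signedRpow, abs_mul, abs_abs,
    abs_of_nonneg (Real.rpow_nonneg (abs_nonneg u) _)]

theorem measurable_signedRpow (q : ℝ) : Measurable (signedRpow q) := by
  unfold signedRpow; fun_prop

theorem rpow_sub_rpow_le_rpow_sub {q a b : ℝ} (hq0 : 0 ≤ q) (hq1 : q ≤ 1) (hb : 0 ≤ b)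
    (hba : b ≤ a) : a ^ q - b ^ q ≤ (a - b) ^ q := by
  have := Real.rpow_add_le_add_rpow (sub_nonneg.2 hba) hb hq0 hq1
  rw [sub_add_cancel] at this
  linarith

theorem abs_rpow_sub_rpow_le {q a b : ℝ} (hq0 : 0 ≤ q) (hq1 : q ≤ 1) (ha : 0 ≤ a) (hb : 0 ≤ b) :
    |a ^ q - b ^ q| ≤ |a - b| ^ q := by
  wlog hba : b ≤ a generalizing a b
  · rw [abs_sub_comm, abs_sub_comm a]
    exact this hb ha (le_of_not_ge hba)
  rw [abs_of_nonneg (sub_nonneg.2 (Real.rpow_le_rpow hb hba hq0)),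
    abs_of_nonneg (sub_nonneg.2 hba)]
  exact rpow_sub_rpow_le_rpow_sub hq0 hq1 hb hba

theorem abs_signedRpow_sub_le {q : ℝ} (hq0 : 0 < q) (hq1 : q ≤ 1) (a b : ℝ) :
    |signedRpow q a - signedRpow q b| ≤ 2 * |a - b| ^ q := by
  have same_sign : ∀ {a b : ℝ}, 0 ≤ a → 0 ≤ b →
      |signedRpow q a - signedRpow q b| ≤ 2 * |a - b| ^ q := fun {a b} ha hb => by
    rw [signedRpow_of_nonneg hq0.ne' ha, signedRpow_of_nonneg hq0.ne' hb]
    linarith [abs_rpow_sub_rpow_le hq0.le hq1 ha hb, Real.rpow_nonneg (abs_nonneg (a - b)) q]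
  have opposite_sign : ∀ {a b : ℝ}, 0 ≤ a → b ≤ 0 →
      |signedRpow q a - signedRpow q b| ≤ 2 * |a - b| ^ q := fun {a b} ha hb => by
    calc |signedRpow q a - signedRpow q b| ≤ |signedRpow q a| + |signedRpow q b| := abs_sub _ _
      _ = |a| ^ q + |b| ^ q := by rw [abs_signedRpow hq0.ne', abs_signedRpow hq0.ne']
      _ ≤ |a - b| ^ q + |a - b| ^ q := by
        have hab : |a - b| = a - b := abs_of_nonneg (by linarith)
        have ha' : |a| ≤ |a - b| := by rw [hab, abs_of_nonneg ha]; linarith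
        have hb' : |b| ≤ |a - b| := by rw [hab, abs_of_nonpos hb]; linarith
        exact add_le_add (Real.rpow_le_rpow (abs_nonneg a) ha' hq0.le)
          (Real.rpow_le_rpow (abs_nonneg b) hb' hq0.le)
      _ = 2 * |a - b| ^ q := by ring
  rcases le_total 0 a with ha | ha <;> rcases le_total 0 b with hb | hb
  · exact same_sign ha hb
  · exact opposite_sign ha hb
  · rw [abs_sub_comm, abs_sub_comm a]
    exact opposite_sign hb ha
  · have h := same_sign (neg_nonneg.2 ha) (neg_nonneg.2 hb)
    rwa [signedRpow_neg, signedRpow_neg, neg_sub_neg, neg_sub_neg,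
      abs_sub_comm (signedRpow q b), abs_sub_comm b] at h

theorem hasDerivAt_abs_rpow_eq_signedRpow {p : ℝ} (hp : 1 < p) (u : ℝ) :
    HasDerivAt (fun x : ℝ => |x| ^ p) (p * signedRpow (p - 1) u) u := by
  convert hasDerivAt_abs_rpow u hp using 1
  rw [signedRpow, ← mul_assoc]
  ring_nf

theorem abs_add_rpow_le {p : ℝ} (hp1 : 1 < p) (hp2 : p ≤ 2) (a b : ℝ) :
    |a + b| ^ p ≤ |a| ^ p + p * signedRpow (p - 1) a * b + 2 * p * |b| ^ p := by
  set g : ℝ → ℝ := fun t => |a + t| ^ p - p * signedRpow (p - 1) a * t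
  have hg : ∀ t, HasDerivAt g (p * (signedRpow (p - 1) (a + t) - signedRpow (p - 1) a)) t :=
    fun t => by
      have := ((hasDerivAt_abs_rpow_eq_signedRpow hp1 (a + t)).comp t
        ((hasDerivAt_id t).const_add a)).sub
        ((hasDerivAt_id t).const_mul (p * signedRpow (p - 1) a))
      exact this.congr_deriv (by ring)
  have hg_le : ∀ t ∈ Set.uIcc 0 b,
      ‖p * (signedRpow (p - 1) (a + t) - signedRpow (p - 1) a)‖ ≤ 2 * p * |b| ^ (p - 1) := by
    intro t ht
    have htb : |t| ≤ |b| := by simpa using Set.abs_sub_left_of_mem_uIcc ht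
    calc ‖p * (signedRpow (p - 1) (a + t) - signedRpow (p - 1) a)‖
        = p * |signedRpow (p - 1) (a + t) - signedRpow (p - 1) a| := by
          rw [Real.norm_eq_abs, abs_mul, abs_of_pos (by linarith)]
      _ ≤ p * (2 * |t| ^ (p - 1)) := by
          gcongr
          simpa using abs_signedRpow_sub_le (by linarith) (by linarith) (a + t) a
      _ ≤ 2 * p * |b| ^ (p - 1) := by
          rw [← mul_assoc, mul_comm p]
          gcongr
  have hmvt := Convex.norm_image_sub_le_of_norm_hasDerivWithin_le
    (fun t _ => (hg t).hasDerivWithinAt) hg_le (convex_uIcc 0 b) Set.left_mem_uIcc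
    Set.right_mem_uIcc
  have hb : |b| ^ (p - 1) * |b| = |b| ^ p := by
    simpa [signedRpow] using signedRpow_of_nonneg (q := p) (by linarith) (abs_nonneg b)
  simp only [g, add_zero, mul_zero, sub_zero, Real.norm_eq_abs] at hmvt
  rw [mul_assoc (2 * p), hb] at hmvt
  linarith [le_abs_self (|a + b| ^ p - p * signedRpow (p - 1) a * b - |a| ^ p)]

section Moments

variable {Ω : Type*} [MeasurableSpace Ω] {P : Measure Ω}

theorem integrable_abs_sum_rpow {ι : Type*} {p : ℝ} (hp : 0 < p) {X : ι → Ω → ℝ}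
    (hmeas : ∀ i, Measurable (X i)) (hmom : ∀ i, Integrable (fun ω => |X i ω| ^ p) P)
    (s : Finset ι) : Integrable (fun ω => |∑ i ∈ s, X i ω| ^ p) P := by
  have memLp_iff : ∀ Y : Ω → ℝ, Measurable Y →
      (Integrable (fun ω => |Y ω| ^ p) P ↔ MemLp Y (ENNReal.ofReal p) P) := fun Y hY => by
    have := integrable_norm_rpow_iff (μ := P) hY.aestronglyMeasurable (by simpa using hp)
      ENNReal.ofReal_ne_top
    simpa [ENNReal.toReal_ofReal hp.le] using this
  rw [memLp_iff _ (Finset.measurable_sum s fun i _ => hmeas i)]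
  exact memLp_finsetSum s fun i _ => (memLp_iff _ (hmeas i)).1 (hmom i)

theorem integral_abs_sum_rpow_le [IsProbabilityMeasure P] {ι : Type*} {p : ℝ} (hp1 : 1 < p)
    (hp2 : p ≤ 2) {X : ι → Ω → ℝ} (hmeas : ∀ i, Measurable (X i)) (hindep : iIndepFun X P)
    (hint : ∀ i, Integrable (X i) P) (hmean : ∀ i, ∫ ω, X i ω ∂P = 0)
    (hmom : ∀ i, Integrable (fun ω => |X i ω| ^ p) P) (s : Finset ι) :
    ∫ ω, |∑ i ∈ s, X i ω| ^ p ∂P ≤ 2 * p * ∑ i ∈ s, ∫ ω, |X i ω| ^ p ∂P := by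
  classical
  induction s using Finset.induction_on with
  | empty => simp [Real.zero_rpow (by linarith : p ≠ 0)]
  | insert i s hi ih =>
    set S : Ω → ℝ := fun ω => ∑ j ∈ s, X j ω
    set Z : Ω → ℝ := fun ω => p * signedRpow (p - 1) (S ω)
    have hS_meas : Measurable S := Finset.measurable_sum s fun j _ => hmeas j
    have hS_mom : Integrable (fun ω => |S ω| ^ p) P :=
      integrable_abs_sum_rpow (by linarith) hmeas hmom s
    have hSX_indep : IndepFun S (X i) P := by
      convert hindep.indepFun_finsetSum_of_notMem hmeas hi using 1
      ext ω
      simp [S]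
    have hZ_int : Integrable Z P := by
      have hS_pow : Integrable (fun ω => |S ω| ^ (p - 1)) P := by
        simpa using integrable_norm_rpow_of_le (p := p - 1) (q := p)
          hS_meas.aestronglyMeasurable (by linarith) (by linarith) (by linarith)
          (by simpa using hS_mom)
      refine (hS_pow.const_mul p).mono'
        (((measurable_signedRpow _).comp hS_meas).const_mul p).aestronglyMeasurable ?_
      refine ae_of_all _ fun ω => le_of_eq ?_
      rw [Real.norm_eq_abs, abs_mul, abs_signedRpow (by linarith), abs_of_pos (by linarith)]
    have hZX_indep : IndepFun Z (X i) P :=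
      hSX_indep.comp ((measurable_signedRpow _).const_mul p) measurable_id
    have hZX_int : Integrable (fun ω => Z ω * X i ω) P := hZX_indep.integrable_mul hZ_int (hint i)
    have hZX_mean : ∫ ω, Z ω * X i ω ∂P = 0 := by
      rw [hZX_indep.integral_fun_mul_eq_mul_integral hZ_int.aestronglyMeasurable
        (hint i).aestronglyMeasurable, hmean i, mul_zero]
    have hSX_mom : Integrable (fun ω => |S ω + X i ω| ^ p) P := by
      simpa [S, sum_insert hi, add_comm] using
        integrable_abs_sum_rpow (by linarith) hmeas hmom (insert i s)
    have hSZ_int : Integrable (fun ω => |S ω| ^ p + Z ω * X i ω) P := hS_mom.add hZX_int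
    have hRHS_int : Integrable (fun ω => |S ω| ^ p + Z ω * X i ω + 2 * p * |X i ω| ^ p) P :=
      hSZ_int.add ((hmom i).const_mul _)
    calc ∫ ω, |∑ j ∈ insert i s, X j ω| ^ p ∂P = ∫ ω, |S ω + X i ω| ^ p ∂P := by
          simp [S, sum_insert hi, add_comm]
      _ ≤ ∫ ω, (|S ω| ^ p + Z ω * X i ω + 2 * p * |X i ω| ^ p) ∂P :=
          integral_mono hSX_mom hRHS_int
            fun ω => abs_add_rpow_le hp1 hp2 (S ω) (X i ω)
      _ = ∫ ω, |S ω| ^ p ∂P + 2 * p * ∫ ω, |X i ω| ^ p ∂P := by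
          rw [integral_add hSZ_int ((hmom i).const_mul _),
            integral_add hS_mom hZX_int, hZX_mean, integral_const_mul, add_zero]
      _ ≤ 2 * p * ∑ j ∈ insert i s, ∫ ω, |X j ω| ^ p ∂P := by
          rw [sum_insert hi]
          linarith

theorem measureReal_lt_abs_le_integral_rpow_div [IsFiniteMeasure P] {Y : Ω → ℝ} {p x : ℝ}
    (hp : 0 ≤ p) (hx : 0 < x) (hY : Integrable (fun ω => |Y ω| ^ p) P) :
    P.real {ω | x < |Y ω|} ≤ (∫ ω, |Y ω| ^ p ∂P) / x ^ p := by
  rw [le_div_iff₀ (Real.rpow_pos_of_pos hx p), mul_comm]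
  calc x ^ p * P.real {ω | x < |Y ω|} ≤ x ^ p * P.real {ω | x ^ p ≤ |Y ω| ^ p} := by
        refine mul_le_mul_of_nonneg_left (measureReal_mono fun ω hω => ?_) (by positivity)
        exact Real.rpow_le_rpow hx.le (le_of_lt hω) hp
    _ ≤ ∫ ω, |Y ω| ^ p ∂P :=
        mul_meas_ge_le_integral_of_nonneg (ae_of_all _ fun ω => by positivity) hY _

end Moments

theorem stmt_12 (κ : ℝ) (hκ0 : 0 < κ) (hκ1 : κ ≤ 1) :
    ∃ Q : ℝ, 0 < Q ∧
      ∀ (Ω : Type) (_ : MeasurableSpace Ω) (P : Measure Ω), IsProbabilityMeasure P →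
        ∀ (n : ℕ) (X : ℕ → Ω → ℝ), (∀ i, Measurable (X i)) →
          iIndepFun X P →
          (∀ i, IdentDistrib (X i) (X 0) P P) →
          Integrable (X 0) P → (∫ ω, X 0 ω ∂P) = 0 →
          Integrable (fun ω => |X 0 ω| ^ (1 + κ)) P →
          ∀ x : ℝ, 0 < x →
            (P {ω | x < |∑ i ∈ Finset.range n, X i ω|}).toReal ≤
              Q * (∫ ω, |X 0 ω| ^ (1 + κ) ∂P) * n / x ^ (1 + κ) := by
  refine ⟨2 * (1 + κ), by linarith, ?_⟩
  intro Ω _ P _ n X hmeas hindep hid hint hmean hmom x hx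
  have habs_meas : Measurable fun u : ℝ => |u| ^ (1 + κ) := by fun_prop
  have hX_int : ∀ i, Integrable (X i) P := fun i => (hid i).integrable_iff.2 hint
  have hX_mean : ∀ i, ∫ ω, X i ω ∂P = 0 := fun i => (hid i).integral_eq.trans hmean
  have hX_mom : ∀ i, Integrable (fun ω => |X i ω| ^ (1 + κ)) P :=
    fun i => ((hid i).comp habs_meas).integrable_iff.2 hmom
  have hX_mom_eq : ∀ i, ∫ ω, |X i ω| ^ (1 + κ) ∂P = ∫ ω, |X 0 ω| ^ (1 + κ) ∂P :=
    fun i => ((hid i).comp habs_meas).integral_eq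
  calc P.real {ω | x < |∑ i ∈ range n, X i ω|}
      ≤ (∫ ω, |∑ i ∈ range n, X i ω| ^ (1 + κ) ∂P) / x ^ (1 + κ) :=
        measureReal_lt_abs_le_integral_rpow_div (by linarith) hx
          (integrable_abs_sum_rpow (by linarith) hmeas hX_mom _)
    _ ≤ (2 * (1 + κ) * ∑ i ∈ range n, ∫ ω, |X i ω| ^ (1 + κ) ∂P) / x ^ (1 + κ) := by
        gcongr
        exact integral_abs_sum_rpow_le (by linarith) (by linarith) hmeas hindep hX_int hX_mean
          hX_mom _
    _ = 2 * (1 + κ) * (∫ ω, |X 0 ω| ^ (1 + κ) ∂P) * n / x ^ (1 + κ) := by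
        simp only [hX_mom_eq, sum_const, card_range, nsmul_eq_mul]
        ring
end
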